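/- Let T be a triangulation of S. Then every edge {u,v} of T satisfies |lind(u) − lind(v)| ≤ 1. Consequently, for every index i, every path in the graph T from a vertex of layer index strictly less than i to a vertex of layer index strictly greater than i passes through a vertex of layer index exactly i; in particular the vertex set of layer i separates the vertices of smaller layer index from the vertices of larger layer index. -/

import Mathlib

open scoped Classical

noncomputable section

/-- The plane. -/
abbrev Pt : Type := EuclideanSpace ℝ (Fin 2)

/-- The closed segment corresponding to an unordered pair of points. -/
def segOf : Sym2 Pt → Set Pt :=
  Sym2.lift ⟨fun p q => segment ℝ p q, fun p q => segment_symm ℝ p q⟩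

/-- The union of all segments of an edge set. -/
def graphUnion (E : Set (Sym2 Pt)) : Set Pt := ⋃ e ∈ E, segOf e

/-- A plane straight-line graph on the point set `S`: edges are nondegenerate segments with
endpoints in `S`, and any two distinct segments intersect in at most a common endpoint. -/
def IsPlaneGraph (S : Set Pt) (E : Set (Sym2 Pt)) : Prop :=
  (∀ e ∈ E, ¬ e.IsDiag) ∧
  (∀ e ∈ E, ∀ p ∈ e, p ∈ S) ∧
  (∀ e ∈ E, ∀ f ∈ E, e ≠ f → segOf e ∩ segOf f ⊆ {p | p ∈ e ∧ p ∈ f})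

/-- A triangulation of `S`: a maximal plane straight-line graph on `S`. -/
def IsTriangulation (S : Set Pt) (E : Set (Sym2 Pt)) : Prop :=
  IsPlaneGraph S E ∧
  ∀ p ∈ S, ∀ q ∈ S, p ≠ q → IsPlaneGraph S (insert s(p, q) E) → s(p, q) ∈ E

/-- General position: no three distinct points of `S` are collinear. -/
def GenPos (S : Set Pt) : Prop :=
  ∀ p ∈ S, ∀ q ∈ S, ∀ r ∈ S, p ≠ q → p ≠ r → q ≠ r →
    ¬ Collinear ℝ ({p, q, r} : Set Pt)

/-- The unbounded face of a plane set `U`: the union of the unbounded connected components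
of the complement of `U`. -/
def outerFace (U : Set Pt) : Set Pt :=
  {x | x ∉ U ∧ ¬ Bornology.IsBounded (connectedComponentIn Uᶜ x)}

/-- The vertices of the plane graph `(S, E)` incident to the unbounded face. -/
def outerVerts (S : Set Pt) (E : Set (Sym2 Pt)) : Set Pt :=
  {v ∈ S | v ∈ closure (outerFace (graphUnion E))}

/-- The edges of the plane graph `(S, E)` incident to the unbounded face. -/
def outerEdges (S : Set Pt) (E : Set (Sym2 Pt)) : Set (Sym2 Pt) :=
  {e ∈ E | segOf e ⊆ closure (outerFace (graphUnion E))}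

/-- Remove the outermost (cactus) layer: delete the vertices incident to the unbounded face
together with all edges incident to them. -/
def peel : Set Pt × Set (Sym2 Pt) → Set Pt × Set (Sym2 Pt) :=
  fun G => (G.1 \ outerVerts G.1 G.2, {e ∈ G.2 | ∀ p ∈ e, p ∉ outerVerts G.1 G.2})

/-- The vertices of the `i`-th cactus layer (`i ≥ 1`). -/
def layerVerts (S : Set Pt) (E : Set (Sym2 Pt)) (i : ℕ) : Set Pt :=
  outerVerts (peel^[i - 1] (S, E)).1 (peel^[i - 1] (S, E)).2

/-- The edges of the `i`-th cactus layer (`i ≥ 1`). -/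
def layerEdges (S : Set Pt) (E : Set (Sym2 Pt)) (i : ℕ) : Set (Sym2 Pt) :=
  outerEdges (peel^[i - 1] (S, E)).1 (peel^[i - 1] (S, E)).2

/-- The layer index of a vertex: the (first) layer containing it. -/
def lind (S : Set Pt) (E : Set (Sym2 Pt)) (v : Pt) : ℕ :=
  sInf {i | 1 ≤ i ∧ v ∈ layerVerts S E i}

/-- The outerplanar index: the number of nonempty cactus layers. -/
def outerplanarIndex (S : Set Pt) (E : Set (Sym2 Pt)) : ℕ :=
  {i : ℕ | 1 ≤ i ∧ (layerVerts S E i).Nonempty}.ncard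

/-- Adjacency in the plane graph with edge set `E`. -/
def Adj (E : Set (Sym2 Pt)) (p q : Pt) : Prop := p ≠ q ∧ s(p, q) ∈ E

/-- The abstract simple graph underlying the edge set `E`. -/
def graphOf (E : Set (Sym2 Pt)) : SimpleGraph Pt where
  Adj p q := p ≠ q ∧ s(p, q) ∈ E
  symm := by
    constructor
    intro p q h
    exact ⟨h.1.symm, by rw [Sym2.eq_swap]; exact h.2⟩
  loopless := ⟨fun p h => h.1 rfl⟩

end

/-!
If `p` lies on layer `k` and `q` is a neighbour of `p` that survives the removal of layer `k`,
then `q` lies on layer `k + 1`. Indeed, once `p` and its edges are deleted, the open segment `pq`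
is free (segments meet only at common endpoints) and so is a small disc around `p` (general
position keeps `p` off every other segment); the old unbounded face touches `p`, so through that
disc and along `pq` the new unbounded face reaches `q`. Hence layer indices of adjacent vertices
differ by at most one, and a walk, along which the layer index moves in steps of at most one,
cannot skip layer `i`.
-/

open Set Bornology Topology

lemma isClosed_graphUnion {E : Set (Sym2 Pt)} (hE : E.Finite) : IsClosed (graphUnion E) :=
  hE.isClosed_biUnion fun e _ => e.ind fun a b => by
    change IsClosed (segment ℝ a b)
    rw [← convexHull_pair]
    exact ((toFinite {a, b}).isCompact_convexHull (𝕜 := ℝ)).isClosed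

lemma graphUnion_mono {E E' : Set (Sym2 Pt)} (h : E' ⊆ E) : graphUnion E' ⊆ graphUnion E :=
  biUnion_subset_biUnion_left h

lemma IsPreconnected.subset_outerFace {U C : Set Pt} (hC : IsPreconnected C) (hCU : C ⊆ Uᶜ)
    (hub : ¬ IsBounded C) : C ⊆ outerFace U :=
  fun _ hx => ⟨hCU hx, fun hb => hub (hb.subset (hC.subset_connectedComponentIn hx hCU))⟩

lemma mem_closure_outerFace_of_subset_halfSpace {U : Set Pt} {u v : Pt} (hu : u ≠ 0)
    (hU : U ⊆ {x | inner ℝ u x ≤ inner ℝ u v}) : v ∈ closure (outerFace U) := by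
  set H := {x : Pt | inner ℝ u v < inner ℝ u x}
  have hray : ∀ t : ℝ, 0 < t → v + t • u ∈ H := fun t ht => by
    have : 0 < inner ℝ u u := real_inner_self_pos.2 hu
    change inner ℝ u v < inner ℝ u (v + t • u)
    rw [inner_add_right, real_inner_smul_right]
    nlinarith
  have hunbounded : ¬ IsBounded H := by
    intro hb
    obtain ⟨r, hr⟩ := hb.subset_closedBall 0
    have hu' : 0 < ‖u‖ := norm_pos_iff.2 hu
    set t := (|r| + ‖v‖ + 1) / ‖u‖
    have ht : ‖t • u‖ = |r| + ‖v‖ + 1 := by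
      rw [norm_smul, Real.norm_of_nonneg (by positivity), div_mul_cancel₀ _ hu'.ne']
    have hr' := mem_closedBall_zero_iff.1 (hr (hray t (by positivity)))
    have := norm_le_add_norm_add (t • u) v
    rw [add_comm (t • u) v] at this
    linarith [le_abs_self r]
  have hconvex : Convex ℝ H := convex_halfSpace_gt (innerSL ℝ u).toLinearMap.isLinear _
  have hH : H ⊆ outerFace U := hconvex.isPreconnected.subset_outerFace
    (fun x (hx : inner ℝ u v < inner ℝ u x) hxU => (hU hxU).not_gt hx) hunbounded
  refine closure_mono hH
    (mem_closure_of_tendsto (f := fun t : ℝ => v + t • u) (b := 𝓝[>] 0) ?_ ?_)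
  · exact ((continuous_const.add (continuous_id.smul continuous_const)).tendsto' 0 v
      (by simp)).mono_left nhdsWithin_le_nhds
  · exact eventually_nhdsWithin_of_forall hray

/-- A small ball around `p` links the old unbounded component to the segment. -/
lemma mem_closure_outerFace_of_disjoint_openSegment {U U' : Set Pt} {p q : Pt} (hU' : IsClosed U')
    (hsub : U' ⊆ U) (hp : p ∈ closure (outerFace U)) (hpU' : p ∉ U')
    (hpq : Disjoint (openSegment ℝ p q) U') : q ∈ closure (outerFace U') := by
  obtain ⟨ε, hε, hball⟩ := Metric.isOpen_iff.1 hU'.isOpen_compl p hpU'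
  obtain ⟨x₀, hx₀, hx₀p⟩ := Metric.mem_closure_iff.1 hp ε hε
  set C := connectedComponentIn Uᶜ x₀ ∪ (Metric.ball p ε ∪ openSegment ℝ p q)
  have hball_seg : (Metric.ball p ε ∩ openSegment ℝ p q).Nonempty :=
    mem_closure_iff.1 (segment_subset_closure_openSegment (left_mem_segment ℝ p q)) _
      Metric.isOpen_ball (Metric.mem_ball_self hε)
  have hC : IsPreconnected C :=
    isPreconnected_connectedComponentIn.union'
      ⟨x₀, mem_connectedComponentIn hx₀.1, Or.inl (Metric.mem_ball'.2 hx₀p)⟩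
      ((convex_ball p ε).isPreconnected.union' hball_seg (convex_openSegment p q).isPreconnected)
  have hCU' : C ⊆ U'ᶜ :=
    union_subset ((connectedComponentIn_subset _ _).trans (compl_subset_compl.2 hsub))
      (union_subset hball hpq.subset_compl_right)
  have hseg : openSegment ℝ p q ⊆ outerFace U' :=
    (subset_union_right.trans subset_union_right).trans
      (hC.subset_outerFace hCU' fun hb => hx₀.2 (hb.subset subset_union_left))
  exact closure_mono hseg (segment_subset_closure_openSegment (right_mem_segment ℝ p q))

lemma finite_of_forall_mem_sym2 {S : Set Pt} {E : Set (Sym2 Pt)} (hS : S.Finite)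
    (hE : ∀ e ∈ E, ∀ p ∈ e, p ∈ S) : E.Finite := by
  refine ((hS.prod hS).image fun pq : Pt × Pt => s(pq.1, pq.2)).subset fun e he => ?_
  induction e using Sym2.ind with
  | h a b =>
    exact ⟨(a, b),
      ⟨hE _ he a (Sym2.mem_mk_left a b), hE _ he b (Sym2.mem_mk_right a b)⟩, rfl⟩

lemma GenPos.mono {S T : Set Pt} (hS : GenPos S) (hT : T ⊆ S) : GenPos T :=
  fun p hp q hq r hr => hS p (hT hp) q (hT hq) r (hT hr)

/-- The rightmost vertex (largest first coordinate) lies on the unbounded face. -/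
lemma outerVerts_nonempty {S : Set Pt} {E : Set (Sym2 Pt)} (hS : S.Finite) (hne : S.Nonempty)
    (hE : ∀ e ∈ E, ∀ p ∈ e, p ∈ S) : (outerVerts S E).Nonempty := by
  set u : Pt := EuclideanSpace.single 0 1
  obtain ⟨v, hv, hmax⟩ := exists_max_image S (fun x => inner ℝ u x) hS hne
  have hhalf : Convex ℝ {x : Pt | inner ℝ u x ≤ inner ℝ u v} :=
    convex_halfSpace_le (innerSL ℝ u).toLinearMap.isLinear _
  refine ⟨v, hv, mem_closure_outerFace_of_subset_halfSpace (u := u) (by simp [u]) ?_⟩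
  refine iUnion₂_subset fun e he => ?_
  induction e using Sym2.ind with
  | h a b =>
    exact hhalf.segment_subset (hmax a (hE _ he a (Sym2.mem_mk_left a b)))
      (hmax b (hE _ he b (Sym2.mem_mk_right a b)))

lemma IsPlaneGraph.notMem_graphUnion {S : Set Pt} {E E' : Set (Sym2 Pt)}
    (hG : IsPlaneGraph S E) (hgp : GenPos S) (hE' : E' ⊆ E) {p : Pt} (hp : p ∈ S)
    (hpE' : ∀ e ∈ E', p ∉ e) : p ∉ graphUnion E' := by
  simp only [graphUnion, mem_iUnion, not_exists]
  intro e he hpe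
  induction e using Sym2.ind with
  | h a b =>
    have hab : a ≠ b := fun h => hG.1 _ (hE' he) (by simp [h])
    have hpa : p ≠ a := fun h => hpE' _ he (h ▸ Sym2.mem_mk_left a b)
    have hpb : p ≠ b := fun h => hpE' _ he (h ▸ Sym2.mem_mk_right a b)
    exact hgp p hp a (hG.2.1 _ (hE' he) a (Sym2.mem_mk_left a b))
      b (hG.2.1 _ (hE' he) b (Sym2.mem_mk_right a b)) hpa hpb hab
      (collinear_insert_of_mem_affineSpan_pair (mem_segment_iff_wbtw.1 hpe).mem_affineSpan)

lemma IsPlaneGraph.disjoint_openSegment_graphUnion {S : Set Pt} {E E' : Set (Sym2 Pt)}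
    (hG : IsPlaneGraph S E) (hE' : E' ⊆ E) {p q : Pt} (hpq : s(p, q) ∈ E)
    (hpqE' : s(p, q) ∉ E') : Disjoint (openSegment ℝ p q) (graphUnion E') := by
  have hne : p ≠ q := fun h => hG.1 _ hpq (by simp [h])
  simp only [graphUnion, disjoint_iUnion_right]
  intro e he
  refine disjoint_left.2 fun x hx hxe => ?_
  obtain ⟨-, hxpq⟩ := hG.2.2 e (hE' he) s(p, q) hpq (ne_of_mem_of_not_mem he hpqE')
    ⟨hxe, openSegment_subset_segment ℝ p q hx⟩
  rcases Sym2.mem_iff.1 hxpq with rfl | rfl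
  · exact hne (left_mem_openSegment_iff.1 hx)
  · exact hne (right_mem_openSegment_iff.1 hx)

lemma isPlaneGraph_peel {G : Set Pt × Set (Sym2 Pt)} (hG : IsPlaneGraph G.1 G.2) :
    IsPlaneGraph (peel G).1 (peel G).2 :=
  ⟨fun e he => hG.1 e he.1, fun e he p hp => ⟨hG.2.1 e he.1 p hp, he.2 p hp⟩,
    fun e he f hf => hG.2.2 e he.1 f hf.1⟩

lemma isPlaneGraph_peel_iterate {S : Set Pt} {E : Set (Sym2 Pt)} (hG : IsPlaneGraph S E) (k : ℕ) :
    IsPlaneGraph (peel^[k] (S, E)).1 (peel^[k] (S, E)).2 :=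
  Function.Iterate.rec (fun G : Set Pt × Set (Sym2 Pt) => IsPlaneGraph G.1 G.2) hG
    (fun _ => isPlaneGraph_peel) k

lemma peel_fst_ssubset {G : Set Pt × Set (Sym2 Pt)} (hG : ∀ e ∈ G.2, ∀ p ∈ e, p ∈ G.1)
    (hfin : G.1.Finite) (hne : G.1.Nonempty) : (peel G).1 ⊂ G.1 := by
  obtain ⟨v, hv⟩ := outerVerts_nonempty hfin hne hG
  exact sdiff_ssubset_left_iff.2 ⟨v, hv.1, hv⟩

lemma mem_outerVerts_peel_of_adj {G : Set Pt × Set (Sym2 Pt)} (hG : IsPlaneGraph G.1 G.2)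
    (hgp : GenPos G.1) (hfin : G.1.Finite) {p q : Pt} (hp : p ∈ outerVerts G.1 G.2)
    (hpq : s(p, q) ∈ G.2) (hq : q ∈ (peel G).1) : q ∈ outerVerts (peel G).1 (peel G).2 := by
  have hsub : (peel G).2 ⊆ G.2 := sep_subset _ _
  have hp_off : ∀ e ∈ (peel G).2, p ∉ e := fun e he hpe => he.2 p hpe hp
  refine ⟨hq, mem_closure_outerFace_of_disjoint_openSegment
    (isClosed_graphUnion ((finite_of_forall_mem_sym2 hfin hG.2.1).subset hsub))
    (graphUnion_mono hsub) hp.2 (hG.notMem_graphUnion hgp hsub hp.1 hp_off)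
    (hG.disjoint_openSegment_graphUnion hsub hpq fun h => hp_off _ h (Sym2.mem_mk_left p q))⟩

lemma Antitone.mem_iff_lt_sInf {α : Type*} {s : ℕ → Set α} (hs : Antitone s) {v : α}
    (h0 : v ∈ s 0) {N : ℕ} (hN : v ∉ s N) (k : ℕ) :
    v ∈ s k ↔ k < sInf {i | 1 ≤ i ∧ v ∈ s (i - 1) \ s i} := by
  classical
  have hex : ∃ n, v ∉ s n := ⟨N, hN⟩
  have hpos : 1 ≤ Nat.find hex := Nat.one_le_iff_ne_zero.2 fun h => (h ▸ Nat.find_spec hex) h0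
  have hmem : Nat.find hex ∈ {i | 1 ≤ i ∧ v ∈ s (i - 1) \ s i} :=
    ⟨hpos, not_not.1 (Nat.find_min hex (by omega)), Nat.find_spec hex⟩
  have hinf : sInf {i | 1 ≤ i ∧ v ∈ s (i - 1) \ s i} = Nat.find hex :=
    le_antisymm (Nat.sInf_le hmem) (le_csInf ⟨_, hmem⟩ fun i hi => Nat.find_min' hex hi.2.2)
  rw [hinf]
  refine ⟨fun hk => lt_of_not_ge fun hle => Nat.find_spec hex (hs hle hk), fun hk => ?_⟩
  exact not_not.1 (Nat.find_min hex hk)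

section Layers

variable {S : Set Pt} {E : Set (Sym2 Pt)}

variable (S E) in
lemma peel_iterate_fst_antitone :
    Antitone fun k => (peel^[k] (S, E)).1 :=
  antitone_nat_of_succ_le fun k => by
    rw [Function.iterate_succ_apply']
    exact sdiff_subset

lemma mem_peel_iterate_snd {p q : Pt} (hpq : s(p, q) ∈ E) :
    ∀ k, p ∈ (peel^[k] (S, E)).1 → q ∈ (peel^[k] (S, E)).1 →
      s(p, q) ∈ (peel^[k] (S, E)).2
  | 0, _, _ => hpq
  | k + 1, hp, hq => by
    rw [Function.iterate_succ_apply'] at hp hq ⊢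
    refine ⟨mem_peel_iterate_snd hpq k hp.1 hq.1, fun r hr => ?_⟩
    rcases Sym2.mem_iff.1 hr with rfl | rfl
    exacts [hp.2, hq.2]

variable (S E) in
lemma layerVerts_succ (k : ℕ) :
    layerVerts S E (k + 1) = (peel^[k] (S, E)).1 \ (peel^[k + 1] (S, E)).1 := by
  rw [Function.iterate_succ_apply', layerVerts, Nat.add_sub_cancel]
  exact (sdiff_sdiff_cancel_left fun _ hv => hv.1).symm

lemma peel_iterate_fst_eq_empty (hG : IsPlaneGraph S E) (hS : S.Finite) :
    (peel^[S.ncard + 1] (S, E)).1 = ∅ := by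
  have hcard :
      ∀ k, (peel^[k] (S, E)).1.Nonempty → (peel^[k] (S, E)).1.ncard + k ≤ S.ncard := by
    intro k
    induction k with
    | zero => simp
    | succ k ih =>
      intro hne
      have hprev : (peel^[k] (S, E)).1.Nonempty :=
        hne.mono (peel_iterate_fst_antitone S E k.le_succ)
      have hfin : (peel^[k] (S, E)).1.Finite :=
        hS.subset (peel_iterate_fst_antitone S E (Nat.zero_le k))
      have hssub : (peel^[k + 1] (S, E)).1 ⊂ (peel^[k] (S, E)).1 := by
        rw [Function.iterate_succ_apply']
        exact peel_fst_ssubset (isPlaneGraph_peel_iterate hG k).2.1 hfin hprev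
      have := ncard_lt_ncard hssub hfin
      have := ih hprev
      omega
  by_contra hne
  have := hcard _ (nonempty_iff_ne_empty.2 hne)
  omega

lemma mem_peel_iterate_iff_lt_lind (hG : IsPlaneGraph S E) (hS : S.Finite) {v : Pt}
    (hv : v ∈ S) (k : ℕ) : v ∈ (peel^[k] (S, E)).1 ↔ k < lind S E v := by
  have hlayers : {i | 1 ≤ i ∧ v ∈ layerVerts S E i} =
      {i | 1 ≤ i ∧ v ∈ (peel^[i - 1] (S, E)).1 \ (peel^[i] (S, E)).1} := by
    ext i
    refine and_congr_right fun hi => ?_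
    obtain ⟨j, rfl⟩ := Nat.exists_eq_add_of_le' hi
    rw [layerVerts_succ, Nat.add_sub_cancel]
  rw [lind, hlayers]
  exact (peel_iterate_fst_antitone S E).mem_iff_lt_sInf hv
    (by rw [peel_iterate_fst_eq_empty hG hS]; exact notMem_empty v) k

lemma lind_le_lind_add_one (hG : IsPlaneGraph S E) (hgp : GenPos S) (hS : S.Finite) {p q : Pt}
    (hpq : s(p, q) ∈ E) : lind S E q ≤ lind S E p + 1 := by
  have hpS := hG.2.1 _ hpq p (Sym2.mem_mk_left p q)
  have hqS := hG.2.1 _ hpq q (Sym2.mem_mk_right p q)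
  obtain ⟨k, hk⟩ : ∃ k, lind S E p = k + 1 :=
    Nat.exists_eq_add_one.2 ((mem_peel_iterate_iff_lt_lind hG hS hpS 0).1 hpS)
  by_contra! hlt
  set G := peel^[k] (S, E)
  have hpG : p ∈ G.1 := (mem_peel_iterate_iff_lt_lind hG hS hpS k).2 (by omega)
  have hp_out : p ∈ outerVerts G.1 G.2 := by
    have := (mem_peel_iterate_iff_lt_lind hG hS hpS (k + 1)).not.2 (by omega)
    rw [Function.iterate_succ_apply'] at this
    exact not_not.1 fun h => this ⟨hpG, h⟩
  have hq_peel : q ∈ (peel G).1 := Function.iterate_succ_apply' peel k (S, E) ▸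
    (mem_peel_iterate_iff_lt_lind hG hS hqS (k + 1)).2 (by omega)
  have hq_out := mem_outerVerts_peel_of_adj
    (isPlaneGraph_peel_iterate hG k)
    (hgp.mono (peel_iterate_fst_antitone S E (Nat.zero_le k)))
    (hS.subset (peel_iterate_fst_antitone S E (Nat.zero_le k))) hp_out
    (mem_peel_iterate_snd hpq k hpG hq_peel.1) hq_peel
  have hq_gone : q ∉ (peel^[k + 2] (S, E)).1 := by
    rw [Function.iterate_succ_apply', Function.iterate_succ_apply']
    exact fun h => h.2 hq_out
  exact hq_gone ((mem_peel_iterate_iff_lt_lind hG hS hqS (k + 2)).2 (by omega))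

end Layers

lemma SimpleGraph.Walk.exists_mem_support_apply_eq {V : Type*} {G : SimpleGraph V} (f : V → ℕ)
    (hf : ∀ u v, G.Adj u v → f v ≤ f u + 1) {i : ℕ} :
    ∀ {a b : V} (w : G.Walk a b), f a ≤ i → i ≤ f b → ∃ x ∈ w.support, f x = i
  | _, _, .nil, ha, hb => ⟨_, List.mem_singleton_self _, le_antisymm ha hb⟩
  | a, _, .cons (v := v) h w, ha, hb => by
    by_cases hv : f v ≤ i
    · obtain ⟨x, hx, hfx⟩ := w.exists_mem_support_apply_eq f hf hv hb
      exact ⟨x, List.mem_cons_of_mem _ hx, hfx⟩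
    · exact ⟨a, List.mem_cons_self, by have := hf _ _ h; omega⟩

/-- layer indices of adjacent vertices differ by at most one, and layer `i`
separates the vertices of smaller layer index from those of larger layer index. -/
theorem layer_index_lipschitz_and_separation
    (S : Set Pt) (hfin : S.Finite) (hgp : GenPos S)
    (E : Set (Sym2 Pt)) (hT : IsTriangulation S E) :
    (∀ p q : Pt, Adj E p q →
      (lind S E p : ℤ) - lind S E q ≤ 1 ∧ (lind S E q : ℤ) - lind S E p ≤ 1) ∧
    (∀ i : ℕ, ∀ a b : Pt, ∀ w : (graphOf E).Walk a b,
      lind S E a < i → i < lind S E b → ∃ x ∈ w.support, lind S E x = i) := by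
  have hstep : ∀ p q, s(p, q) ∈ E → lind S E q ≤ lind S E p + 1 :=
    fun p q => lind_le_lind_add_one hT.1 hgp hfin
  refine ⟨fun p q hpq => ?_, fun i a b w ha hb => ?_⟩
  · have := hstep p q hpq.2
    have := hstep q p (Sym2.eq_swap ▸ hpq.2)
    omega
  · exact w.exists_mem_support_apply_eq (lind S E)
      (fun u v (h : (graphOf E).Adj u v) => hstep u v h.2) ha.le hb.le
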